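/- arXiv:1605.08142 — 12 statements merged into one kernel-verified Lean document; each statement's English description precedes it below -/
import Mathlib

section
/- Let N ≥ 3 be an integer, let p, q be nonzero real numbers, and let T, A, B, λ be real numbers with T − λA + B = 0. Set 2* = 2N/(N−2), d*(p,q) = N(p−2)(q−2) − 2pq, d = (q−p)·d*(p,q)/(2Npq), E″ = T − (p−1)λA + (q−1)B and P = ((N−2)/(2N))·T − (λ/p)·A + (1/q)·B. Then: d·T = ((q−p)/(pq))·E″ + (q−p)·P, d·(λA) = ((q−2*)/(2*·q))·E″ + (q−2)·P, and d·B = ((p−2*)/(2*·p))·E″ + (p−2)·P. -/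
/-- Here `s` stands for `1 / 2* = (N - 2) / (2N)`, in terms of which every coefficient is affine. -/
theorem fibering_pohozaev_cramer {K : Type*} [Field K] {s p q T a B E'' P : K}
    (hp : p ≠ 0) (hq : q ≠ 0) (hE' : T - a + B = 0)
    (hE'' : E'' = T - (p - 1) * a + (q - 1) * B) (hP : P = s * T - a / p + B / q) :
    (q - p) * (s - 1 / p - 1 / q + 2 / (p * q)) * T = (q - p) / (p * q) * E'' + (q - p) * P ∧
    (q - p) * (s - 1 / p - 1 / q + 2 / (p * q)) * a = (s - 1 / q) * E'' + (q - 2) * P ∧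
    (q - p) * (s - 1 / p - 1 / q + 2 / (p * q)) * B = (s - 1 / p) * E'' + (p - 2) * P := by
  obtain rfl : B = a - T := by linear_combination hE'
  subst hE'' hP
  refine ⟨?_, ?_, ?_⟩ <;> field_simp <;> ring

/-- Cramer-type resolution of the fibering/Pohozaev linear system when `E' = 0`. -/
theorem fibering_system_resolution (N : ℕ) (hN : 3 ≤ N) (p q T A B lam : ℝ)
    (hp : p ≠ 0) (hq : q ≠ 0) (hE' : T - lam * A + B = 0) :
    let twoStar : ℝ := 2 * N / ((N : ℝ) - 2)
    let dstar : ℝ := (N : ℝ) * (p - 2) * (q - 2) - 2 * p * q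
    let d : ℝ := (q - p) * dstar / (2 * N * p * q)
    let E'' : ℝ := T - (p - 1) * lam * A + (q - 1) * B
    let P : ℝ := ((N : ℝ) - 2) / (2 * N) * T - lam / p * A + 1 / q * B
    d * T = (q - p) / (p * q) * E'' + (q - p) * P ∧
    d * (lam * A) = (q - twoStar) / (twoStar * q) * E'' + (q - 2) * P ∧
    d * B = (p - twoStar) / (twoStar * p) * E'' + (p - 2) * P := by
  intro twoStar dstar d E'' P
  set s : ℝ := ((N : ℝ) - 2) / (2 * N) with hs
  have hN0 : (N : ℝ) ≠ 0 := by positivity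
  have hN2 : (N : ℝ) - 2 ≠ 0 := by
    have : (3 : ℝ) ≤ N := by exact_mod_cast hN
    linarith
  have htwoStar : twoStar = 1 / s := by simp only [twoStar, hs]; field_simp
  have hd : d = (q - p) * (s - 1 / p - 1 / q + 2 / (p * q)) := by
    simp only [d, dstar, hs]; field_simp; ring
  have hcoef (r : ℝ) (hr : r ≠ 0) : (r - twoStar) / (twoStar * r) = s - 1 / r := by
    have : s ≠ 0 := by positivity
    rw [htwoStar]; field_simp
  rw [hd, hcoef q hq, hcoef p hp]
  exact fibering_pohozaev_cramer hp hq hE' (by ring) (by ring)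
end

section
/- Let N ≥ 3 be an integer, let p, q > 0 be real with p ≠ q, let λ > 0, and suppose there exist real numbers T > 0, A > 0, B > 0 satisfying T − λA + B = 0 and ((N−2)/(2N))·T − (λ/p)·A + (1/q)·B = 0. Then either 2N/(N−2) < p < q or q < p < 2N/(N−2). (This is the necessary condition of Theorem 1 for existence of a nontrivial solution of −Δu = λ|u|^{p−2}u − |u|^{q−2}u on ℝ^N, N ≥ 3.) -/
/-! Multiplying the Pohozaev identity by `p` and subtracting `E' = 0` eliminates `A`:
`((N-2)p/(2N) - 1) T = ((q-p)/q) B`. Since `T, B, q > 0` and `p ≠ q`, the numbers `p - 2*` and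
`q - p` have the same sign, which is the claim. -/

theorem mul_pohozaev_sub_fibering_eq (c p q lam T A B : ℝ) (hp : p ≠ 0) (hq : q ≠ 0) :
    p * (c * T - lam / p * A + 1 / q * B) - (T - lam * A + B) =
      (c * p - 1) * T - (q - p) / q * B := by
  field_simp
  ring

theorem mul_sub_pos_of_fibering_eq_zero_of_pohozaev_eq_zero (c p q lam T A B : ℝ) (hp : p ≠ 0)
    (hq : 0 < q) (hpq : p ≠ q) (hT : 0 < T) (hB : 0 < B)
    (hE' : T - lam * A + B = 0) (hP : c * T - lam / p * A + 1 / q * B = 0) :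
    0 < (c * p - 1) * (q - p) := by
  have hcomb : (c * p - 1) * T = (q - p) / q * B := by
    have := mul_pohozaev_sub_fibering_eq c p q lam T A B hp hq.ne'
    rw [hE', hP] at this
    linarith
  have hkey : (c * p - 1) * (q - p) * T = (q - p) ^ 2 / q * B := by
    rw [mul_right_comm, hcomb]
    ring
  have hrhs : 0 < (q - p) ^ 2 / q * B := by
    have : 0 < (q - p) ^ 2 := sq_pos_of_ne_zero (sub_ne_zero.mpr hpq.symm)
    positivity
  exact (mul_pos_iff_of_pos_right hT).mp (hkey ▸ hrhs)

theorem sobolev_coeff_mul_sub_one_eq (n p : ℝ) (hn : n ≠ 2) (hn0 : n ≠ 0) :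
    (n - 2) / (2 * n) * p - 1 = (n - 2) / (2 * n) * (p - 2 * n / (n - 2)) := by
  have : n - 2 ≠ 0 := sub_ne_zero.mpr hn
  field_simp

theorem necessary_condition_RN_general (N : ℕ) (hN : 3 ≤ N) (p q lam T A B : ℝ)
    (hp : 0 < p) (hq : 0 < q) (hpq : p ≠ q)
    (hT : 0 < T) (hB : 0 < B)
    (hE' : T - lam * A + B = 0)
    (hP : ((N : ℝ) - 2) / (2 * N) * T - lam / p * A + 1 / q * B = 0) :
    (2 * N / ((N : ℝ) - 2) < p ∧ p < q) ∨ (q < p ∧ p < 2 * N / ((N : ℝ) - 2)) := by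
  have hN' : (2 : ℝ) < N := by exact_mod_cast hN
  have hc : 0 < ((N : ℝ) - 2) / (2 * N) := div_pos (by linarith) (by linarith)
  have hsign := mul_sub_pos_of_fibering_eq_zero_of_pohozaev_eq_zero _ p q lam T A B hp.ne' hq hpq
    hT hB hE' hP
  rw [sobolev_coeff_mul_sub_one_eq _ p hN'.ne' (by linarith), mul_assoc,
    mul_pos_iff_of_pos_left hc] at hsign
  rcases mul_pos_iff.mp hsign with ⟨hp2, hqp⟩ | ⟨hp2, hqp⟩
  · exact Or.inl ⟨by linarith, by linarith⟩
  · exact Or.inr ⟨by linarith, by linarith⟩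

/-- Necessary condition of Theorem 1 (`D = ℝ^N`, `N ≥ 3`): if `E' = 0` and `P = 0`
have a solution with `T, A, B > 0`, then `2* < p < q` or `q < p < 2*`. -/
theorem necessary_condition_RN (N : ℕ) (hN : 3 ≤ N) (p q lam T A B : ℝ)
    (hp : 0 < p) (hq : 0 < q) (hpq : p ≠ q) (hlam : 0 < lam)
    (hT : 0 < T) (hA : 0 < A) (hB : 0 < B)
    (hE' : T - lam * A + B = 0)
    (hP : ((N : ℝ) - 2) / (2 * N) * T - lam / p * A + 1 / q * B = 0) :
    (2 * N / ((N : ℝ) - 2) < p ∧ p < q) ∨ (q < p ∧ p < 2 * N / ((N : ℝ) - 2)) :=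
  necessary_condition_RN_general N hN p q lam T A B hp hq hpq hT hB hE' hP
end

section
/- Let p, q > 0 be real with p ≠ q, let λ > 0, and let T > 0, A > 0, B > 0 be real numbers with T − λA + B = 0. If moreover −(λ/p)·A + (1/q)·B = 0 (the Pohozaev constraint for dimension N = 2), then q < p; likewise, if −(1/2)·T − (λ/p)·A + (1/q)·B = 0 (the Pohozaev constraint for dimension N = 1), then q < p. (This is the necessary condition of Theorem 1 for existence of a nontrivial solution of −Δu = λ|u|^{p−2}u − |u|^{q−2}u on ℝ^N, N = 1, 2.) -/
/-!
The Nehari identity `T - λA + B = 0` with `T > 0` gives `B < λA`. Both Pohozaev identities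
give `λA / p ≤ B / q` (with equality for `N = 2`, and the slack `T / 2` for `N = 1`),
so `B / p < λA / p ≤ B / q`, which forces `q < p`.
-/

theorem lt_of_div_le_div_of_lt {p q b c : ℝ} (hp : 0 < p) (hq : 0 < q) (hb : 0 < b)
    (hbc : b < c) (h : c / p ≤ b / q) : q < p :=
  (div_lt_div_iff_of_pos_left hb hp hq).mp
    ((div_lt_div_of_pos_right hbc hp).trans_le h)

theorem necessary_condition_low_dim_general (p q lam T A B : ℝ)
    (hp : 0 < p) (hq : 0 < q)
    (hT : 0 < T) (hB : 0 < B)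
    (hE' : T - lam * A + B = 0) :
    (-(lam / p) * A + 1 / q * B = 0 → q < p) ∧
    (-(1 / 2) * T - lam / p * A + 1 / q * B = 0 → q < p) := by
  have hB_lt : B < lam * A := by linarith
  refine ⟨fun hP₂ => ?_, fun hP₁ => ?_⟩
  · refine lt_of_div_le_div_of_lt hp hq hB hB_lt (le_of_eq ?_)
    linear_combination -hP₂
  · refine lt_of_div_le_div_of_lt hp hq hB hB_lt ?_
    have : lam * A / p + T / 2 = B / q := by linear_combination -hP₁
    linarith

/-- Necessary condition of Theorem 1 for `N = 1, 2`: under the Nehari constraint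
`T - λA + B = 0`, the Pohozaev constraint for dimension `2` (resp. `1`) forces `q < p`. -/
theorem necessary_condition_low_dim (p q lam T A B : ℝ)
    (hp : 0 < p) (hq : 0 < q) (hpq : p ≠ q) (hlam : 0 < lam)
    (hT : 0 < T) (hA : 0 < A) (hB : 0 < B)
    (hE' : T - lam * A + B = 0) :
    (-(lam / p) * A + 1 / q * B = 0 → q < p) ∧
    (-(1 / 2) * T - lam / p * A + 1 / q * B = 0 → q < p) :=
  necessary_condition_low_dim_general p q lam T A B hp hq hT hB hE'
end

section
/- Let N be a positive integer, let p, q > 0 be real, let λ > 0, and let T > 0, A > 0, B > 0 be real numbers satisfying T − λA + B = 0 and ((N−2)/(2N))·T − (λ/p)·A + (1/q)·B = 0. Then the energy E = (1/2)·T − (λ/p)·A + (1/q)·B equals T/N, and in particular E > 0; moreover, with E″ = T − (p−1)λA + (q−1)B and d*(p,q) = N(p−2)(q−2) − 2pq, one has the equivalences: E″ = 0 ⟺ d*(p,q) = 0; E″ > 0 ⟺ d*(p,q) > 0; E″ < 0 ⟺ d*(p,q) < 0. (This is statement (2°) of Theorem 1.) -/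
/-!
The energy differs from the Pohozaev expression by exactly `T/N`, so `P = 0` gives `E = T/N`.
For the second fibering derivative one checks the polynomial identity
`2N·E'' = T·d*(p,q) + 2N(p+q-1)·E' - 2Npq·P`; on solutions with `E' = P = 0` it reads
`2N·E'' = T·d*(p,q)`, and `T > 0` makes the signs agree.
-/

theorem sign_iffs_of_pos_mul_eq_pos_mul {α : Type*} [Field α] [LinearOrder α]
    [IsStrictOrderedRing α] {c t x y : α} (hc : 0 < c) (ht : 0 < t) (h : c * x = t * y) :
    (x = 0 ↔ y = 0) ∧ (0 < x ↔ 0 < y) ∧ (x < 0 ↔ y < 0) := by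
  have pos_iff : ∀ {x y : α}, c * x = t * y → (0 < x ↔ 0 < y) := fun h => by
    rw [← mul_pos_iff_of_pos_left hc, h, mul_pos_iff_of_pos_left ht]
  refine ⟨by rw [← mul_eq_zero_iff_left hc.ne', h, mul_eq_zero_iff_left ht.ne'], pos_iff h, ?_⟩
  simpa only [neg_pos] using pos_iff (x := -x) (y := -y) (by rw [mul_neg, mul_neg, h])

section FiberingIdentities

variable {n p q lam T A B : ℝ}

theorem energy_eq_pohozaev_add (hn : n ≠ 0) :
    1 / 2 * T - lam / p * A + 1 / q * B
      = ((n - 2) / (2 * n) * T - lam / p * A + 1 / q * B) + T / n := by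
  field_simp
  ring

theorem two_mul_secondDeriv_eq (hn : n ≠ 0) (hp : p ≠ 0) (hq : q ≠ 0) :
    2 * n * (T - (p - 1) * lam * A + (q - 1) * B)
      = T * (n * (p - 2) * (q - 2) - 2 * p * q) + 2 * n * (p + q - 1) * (T - lam * A + B)
        - 2 * n * p * q * ((n - 2) / (2 * n) * T - lam / p * A + 1 / q * B) := by
  field_simp
  ring

end FiberingIdentities

theorem energy_and_second_derivative_sign_general (N : ℕ) (hN : 0 < N) (p q lam T A B : ℝ)
    (hp : 0 < p) (hq : 0 < q)
    (hT : 0 < T)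
    (hE' : T - lam * A + B = 0)
    (hP : ((N : ℝ) - 2) / (2 * N) * T - lam / p * A + 1 / q * B = 0) :
    let E : ℝ := 1 / 2 * T - lam / p * A + 1 / q * B
    let E'' : ℝ := T - (p - 1) * lam * A + (q - 1) * B
    let dstar : ℝ := (N : ℝ) * (p - 2) * (q - 2) - 2 * p * q
    E = T / N ∧ 0 < E ∧
    (E'' = 0 ↔ dstar = 0) ∧ (0 < E'' ↔ 0 < dstar) ∧ (E'' < 0 ↔ dstar < 0) := by
  intro E E'' dstar
  have hNpos : (0 : ℝ) < N := Nat.cast_pos.mpr hN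
  have hE : E = T / N := by
    rw [show E = _ from energy_eq_pohozaev_add hNpos.ne', hP, zero_add]
  have hE'' : 2 * N * E'' = T * dstar := by
    rw [show 2 * N * E'' = _ from two_mul_secondDeriv_eq hNpos.ne' hp.ne' hq.ne', hE', hP]
    ring
  exact ⟨hE, hE ▸ div_pos hT hNpos,
    sign_iffs_of_pos_mul_eq_pos_mul (by positivity) hT hE''⟩

/-- Statement (2°) of Theorem 1: if `E' = 0` and `P = 0`, then the energy equals `T/N`
(hence is positive), and the sign of `E''` coincides with the sign of `d*(p,q)`. -/
theorem energy_and_second_derivative_sign (N : ℕ) (hN : 0 < N) (p q lam T A B : ℝ)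
    (hp : 0 < p) (hq : 0 < q) (hlam : 0 < lam)
    (hT : 0 < T) (hA : 0 < A) (hB : 0 < B)
    (hE' : T - lam * A + B = 0)
    (hP : ((N : ℝ) - 2) / (2 * N) * T - lam / p * A + 1 / q * B = 0) :
    let E : ℝ := 1 / 2 * T - lam / p * A + 1 / q * B
    let E'' : ℝ := T - (p - 1) * lam * A + (q - 1) * B
    let dstar : ℝ := (N : ℝ) * (p - 2) * (q - 2) - 2 * p * q
    E = T / N ∧ 0 < E ∧
    (E'' = 0 ↔ dstar = 0) ∧ (0 < E'' ↔ 0 < dstar) ∧ (E'' < 0 ↔ dstar < 0) :=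
  energy_and_second_derivative_sign_general N hN p q lam T A B hp hq hT hE' hP
end

section
/- Let N ≥ 3 be an integer, let λ > 0, and let p, q be real numbers with 2N/(N−2) < q < p. Then there exist no real numbers T > 0, A > 0, B > 0 satisfying both T − λA + B = 0 and ((N−2)/(2N))·T − (λ/p)·A + (1/q)·B = 0. (This is the algebraic content of the Corollary answering Strauss's question: the zero-mass problem −Δu = λ|u|^{p−2}u − |u|^{q−2}u on ℝ^N has no nontrivial solution when 2* < q < p and N ≥ 3.) -/
/-!
Subtracting `(1/p) E'` from `P` eliminates `A` and leaves
`((N-2)/(2N) - 1/p) T + (1/q - 1/p) B`. Since `(N-2)/(2N) = 1/2*` and `2* < q < p`,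
both coefficients are positive, so this cannot vanish for `T, B > 0`.
-/

lemma one_div_lt_of_two_mul_div_sub_two_lt {N q : ℝ} (hN : 2 < N) (hq : 2 * N / (N - 2) < q) :
    1 / q < (N - 2) / (2 * N) := by
  rw [← one_div_div (2 * N)]
  exact one_div_lt_one_div_of_lt (div_pos (by linarith) (by linarith)) hq

lemma pohozaev_ne_zero_of_fibering_eq_zero {c p q lam T A B : ℝ} (hqp : 1 / p < 1 / q)
    (hcq : 1 / q < c) (hT : 0 < T) (hB : 0 < B) (hE : T - lam * A + B = 0) :
    c * T - lam / p * A + 1 / q * B ≠ 0 := by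
  have elim_A : c * T - lam / p * A + 1 / q * B
      = (c - 1 / p) * T + (1 / q - 1 / p) * B + 1 / p * (T - lam * A + B) := by ring
  rw [elim_A, hE]
  have hTcoef := mul_pos (sub_pos.2 (hqp.trans hcq)) hT
  have hBcoef := mul_pos (sub_pos.2 hqp) hB
  linarith

theorem strauss_no_solution_general (N : ℕ) (hN : 3 ≤ N) (p q lam : ℝ)
    (hq : 2 * N / ((N : ℝ) - 2) < q) (hqp : q < p) :
    ¬ ∃ T A B : ℝ, 0 < T ∧ 0 < A ∧ 0 < B ∧
      T - lam * A + B = 0 ∧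
      ((N : ℝ) - 2) / (2 * N) * T - lam / p * A + 1 / q * B = 0 := by
  rintro ⟨T, A, B, hT, -, hB, hE, hP⟩
  have hN2 : (2 : ℝ) < N := by exact_mod_cast hN
  have hq0 : 0 < q := lt_trans (div_pos (by linarith) (by linarith)) hq
  exact pohozaev_ne_zero_of_fibering_eq_zero (one_div_lt_one_div_of_lt hq0 hqp)
    (one_div_lt_of_two_mul_div_sub_two_lt hN2 hq) hT hB hE hP

/-- Answer to Strauss's question (algebraic content): for `N ≥ 3` and `2* < q < p`,
the system `E' = 0`, `P = 0` has no solution with `T, A, B > 0`. -/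
theorem strauss_no_solution (N : ℕ) (hN : 3 ≤ N) (p q lam : ℝ) (hlam : 0 < lam)
    (hq : 2 * N / ((N : ℝ) - 2) < q) (hqp : q < p) :
    ¬ ∃ T A B : ℝ, 0 < T ∧ 0 < A ∧ 0 < B ∧
      T - lam * A + B = 0 ∧
      ((N : ℝ) - 2) / (2 * N) * T - lam / p * A + 1 / q * B = 0 :=
  strauss_no_solution_general N hN p q lam hq hqp
end

section
/- Let N ≥ 3 be an integer, let p, q > 0 be real with p ≠ q, let λ > 0, and suppose T > 0, A > 0, B > 0 are real numbers satisfying T − λA + B = 0 and ((N−2)/(2N))·T − (λ/p)·A + (1/q)·B ≤ 0. Then p < q or p < 2N/(N−2). (This is the necessary condition of Theorem 2 for existence of a nontrivial nonnegative solution of −Δu = λ|u|^{p−2}u − |u|^{q−2}u on a bounded star-shaped domain: either 0 < p < q or 0 < q < p < 2*.) -/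
/-!
Multiplying the Pohozaev inequality by `p` and eliminating `λA` with the Nehari identity
`T - λA + B = 0` gives `(p (N-2)/(2N) - 1) T + (p/q - 1) B ≤ 0`. If `p > q`, the `B`-term is
positive, so the coefficient of `T` must be negative, i.e. `p < 2N/(N-2)`.
-/

lemma mul_pohozaev_eq_of_nehari {d p q lam T A B : ℝ} (hp : p ≠ 0)
    (hE' : T - lam * A + B = 0) :
    p * (d * T - lam / p * A + 1 / q * B) = (d * p - 1) * T + (p / q - 1) * B := by
  have hcancel : p * (lam / p) = lam := mul_div_cancel₀ lam hp
  linear_combination (-A) * hcancel + hE'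

lemma mul_lt_one_of_nehari_of_pohozaev_nonpos {d p q lam T A B : ℝ} (hq : 0 < q) (hqp : q < p)
    (hT : 0 < T) (hB : 0 < B) (hE' : T - lam * A + B = 0)
    (hP : d * T - lam / p * A + 1 / q * B ≤ 0) :
    d * p < 1 := by
  have hp : 0 < p := hq.trans hqp
  have hcomb : (d * p - 1) * T + (p / q - 1) * B ≤ 0 := by
    rw [← mul_pohozaev_eq_of_nehari hp.ne' hE']
    exact mul_nonpos_of_nonneg_of_nonpos hp.le hP
  have hBterm : 0 < (p / q - 1) * B :=
    mul_pos (sub_pos.mpr ((one_lt_div hq).mpr hqp)) hB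
  have hTterm : (d * p - 1) * T < 0 := by linarith
  linarith [neg_of_mul_neg_left hTterm hT.le]

lemma lt_two_mul_div_sub_two_iff {n p : ℝ} (hn : 2 < n) :
    p < 2 * n / (n - 2) ↔ (n - 2) / (2 * n) * p < 1 := by
  have hn2 : 0 < n - 2 := sub_pos.mpr hn
  have h2n : 0 < 2 * n := by linarith
  rw [lt_div_iff₀ hn2, div_mul_eq_mul_div, div_lt_one h2n, mul_comm]

theorem necessary_condition_bounded_general (N : ℕ) (hN : 3 ≤ N) (p q lam T A B : ℝ)
    (hq : 0 < q) (hpq : p ≠ q)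
    (hT : 0 < T) (hB : 0 < B)
    (hE' : T - lam * A + B = 0)
    (hP : ((N : ℝ) - 2) / (2 * N) * T - lam / p * A + 1 / q * B ≤ 0) :
    p < q ∨ p < 2 * N / ((N : ℝ) - 2) := by
  rcases hpq.lt_or_gt with hlt | hgt
  · exact Or.inl hlt
  · have hN2 : (2 : ℝ) < N := by exact_mod_cast hN
    exact Or.inr <| (lt_two_mul_div_sub_two_iff hN2).mpr <|
      mul_lt_one_of_nehari_of_pohozaev_nonpos hq hgt hT hB hE' hP

/-- Necessary condition of Theorem 2 (bounded star-shaped domain, `N ≥ 3`):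
if `E' = 0` and `P ≤ 0` with `T, A, B > 0`, then `p < q` or `p < 2*`. -/
theorem necessary_condition_bounded (N : ℕ) (hN : 3 ≤ N) (p q lam T A B : ℝ)
    (hp : 0 < p) (hq : 0 < q) (hpq : p ≠ q) (hlam : 0 < lam)
    (hT : 0 < T) (hA : 0 < A) (hB : 0 < B)
    (hE' : T - lam * A + B = 0)
    (hP : ((N : ℝ) - 2) / (2 * N) * T - lam / p * A + 1 / q * B ≤ 0) :
    p < q ∨ p < 2 * N / ((N : ℝ) - 2) :=
  necessary_condition_bounded_general N hN p q lam T A B hq hpq hT hB hE' hP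
end

section
/- Let N be a positive integer, let p, q > 0 be real, and let T, A, B, λ be real numbers with T > 0, T − λA + B = 0 and ((N−2)/(2N))·T − (λ/p)·A + (1/q)·B ≤ 0. If d*(p,q) = N(p−2)(q−2) − 2pq > 0, then E″ = T − (p−1)λA + (q−1)B satisfies E″ ≥ d*(p,q)·T/(2N) > 0. (This is the bounded-domain part of Theorem 2(2°): under the Pohozaev sign condition P ≤ 0, solutions with d*(p,q) > 0 have positive second fibering derivative.) -/
/-! The second fibering derivative is an explicit combination of the first one and the Pohozaev
expression:
`E'' = d*(p,q) T / (2N) - p q P + (p + q - 1) E'`.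
Hence `E' = 0` and `P ≤ 0` give `E'' ≥ d*(p,q) T / (2N)`, which is positive when `d*(p,q) > 0`. -/

namespace FiberingPohozaev

variable (N p q T A B lam : ℝ)

def firstFiberingDeriv : ℝ := T - lam * A + B

def secondFiberingDeriv : ℝ := T - (p - 1) * lam * A + (q - 1) * B

noncomputable def pohozaev : ℝ := (N - 2) / (2 * N) * T - lam / p * A + 1 / q * B

def dStar : ℝ := N * (p - 2) * (q - 2) - 2 * p * q

variable {N p q T A B lam}

theorem secondFiberingDeriv_eq (hN : N ≠ 0) (hp : p ≠ 0) (hq : q ≠ 0) :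
    secondFiberingDeriv p q T A B lam =
      dStar N p q * T / (2 * N) - p * q * pohozaev N p q T A B lam
        + (p + q - 1) * firstFiberingDeriv T A B lam := by
  unfold secondFiberingDeriv dStar pohozaev firstFiberingDeriv
  field_simp
  ring

theorem dStar_mul_div_le_secondFiberingDeriv (hN : N ≠ 0) (hp : 0 < p) (hq : 0 < q)
    (hE' : firstFiberingDeriv T A B lam = 0) (hP : pohozaev N p q T A B lam ≤ 0) :
    dStar N p q * T / (2 * N) ≤ secondFiberingDeriv p q T A B lam := by
  have hpqP : p * q * pohozaev N p q T A B lam ≤ 0 :=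
    mul_nonpos_of_nonneg_of_nonpos (mul_pos hp hq).le hP
  rw [secondFiberingDeriv_eq hN hp.ne' hq.ne', hE']
  linarith

end FiberingPohozaev

open FiberingPohozaev in
/-- Theorem 2(2°), bounded-domain part: if `E' = 0`, `P ≤ 0`, `T > 0` and
`d*(p,q) > 0`, then `E'' ≥ d*(p,q) * T / (2N) > 0`. -/
theorem second_derivative_positive_bounded (N : ℕ) (hN : 0 < N) (p q T A B lam : ℝ)
    (hp : 0 < p) (hq : 0 < q) (hT : 0 < T)
    (hE' : T - lam * A + B = 0)
    (hP : ((N : ℝ) - 2) / (2 * N) * T - lam / p * A + 1 / q * B ≤ 0)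
    (hd : 0 < (N : ℝ) * (p - 2) * (q - 2) - 2 * p * q) :
    ((N : ℝ) * (p - 2) * (q - 2) - 2 * p * q) * T / (2 * N) ≤
      T - (p - 1) * lam * A + (q - 1) * B ∧
    0 < ((N : ℝ) * (p - 2) * (q - 2) - 2 * p * q) * T / (2 * N) := by
  have hN' : (0 : ℝ) < N := Nat.cast_pos.mpr hN
  exact ⟨dStar_mul_div_le_secondFiberingDeriv hN'.ne' hp hq hE' hP, by positivity⟩
end

section
/- Let N ≥ 3 be an integer, let p, q > 0 be real with p ≠ q, let λ > 0, and suppose T > 0, A > 0, B > 0 are real numbers satisfying T − λA + B = 0 and ((N−2)/(2N))·T − (λ/p)·A + (1/q)·B ≥ 0. Then q < p or 2N/(N−2) < p. (This is the necessary condition of Theorem 3 for existence of a nontrivial nonnegative solution of −Δu = λ|u|^{p−2}u − |u|^{q−2}u on the exterior of a bounded star-shaped domain, N ≥ 3: either 0 < q < p or 2* < p < q.) -/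
/-!
Eliminating `λA = T + B` via `E' = 0` turns the Pohozaev expression into
`(1/2* - 1/p) T + (1/q - 1/p) B`. If `p ≤ q` and `p ≤ 2*`, the first coefficient is `≤ 0` and,
since `p ≠ q`, the second is `< 0`, so `P < 0`.
-/

lemma pohozaev_eq_of_fibering {c p q lam T A B : ℝ} (hp : p ≠ 0) (hE' : T - lam * A + B = 0) :
    c * T - lam / p * A + 1 / q * B = (c - 1 / p) * T + (1 / q - 1 / p) * B := by
  have hlamA : lam * A = T + B := by linarith
  rw [div_mul_eq_mul_div, hlamA]
  field_simp
  ring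

lemma pohozaev_neg_of_le {s p q lam T A B : ℝ} (hp : 0 < p) (hpq : p < q) (hps : p ≤ s)
    (hT : 0 ≤ T) (hB : 0 < B) (hE' : T - lam * A + B = 0) :
    s⁻¹ * T - lam / p * A + 1 / q * B < 0 := by
  rw [pohozaev_eq_of_fibering hp.ne' hE']
  have hT_coeff : s⁻¹ - 1 / p ≤ 0 := by
    rw [one_div, sub_nonpos]
    exact inv_anti₀ hp hps
  have hB_coeff : 1 / q - 1 / p < 0 := sub_neg.2 (one_div_lt_one_div_of_lt hp hpq)
  exact add_neg_of_nonpos_of_neg (mul_nonpos_of_nonpos_of_nonneg hT_coeff hT)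
    (mul_neg_of_neg_of_pos hB_coeff hB)

theorem necessary_condition_exterior_general (N : ℕ) (p q lam T A B : ℝ)
    (hp : 0 < p) (hpq : p ≠ q)
    (hT : 0 < T) (hB : 0 < B)
    (hE' : T - lam * A + B = 0)
    (hP : 0 ≤ ((N : ℝ) - 2) / (2 * N) * T - lam / p * A + 1 / q * B) :
    q < p ∨ 2 * N / ((N : ℝ) - 2) < p := by
  by_contra! h
  obtain ⟨hpq_le, hp_crit⟩ := h
  rw [← inv_div] at hP
  exact (pohozaev_neg_of_le hp (lt_of_le_of_ne hpq_le hpq) hp_crit hT.le hB hE').not_ge hP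

/-- Necessary condition of Theorem 3 (exterior domain, `N ≥ 3`):
if `E' = 0` and `P ≥ 0` with `T, A, B > 0`, then `q < p` or `2* < p`. -/
theorem necessary_condition_exterior (N : ℕ) (hN : 3 ≤ N) (p q lam T A B : ℝ)
    (hp : 0 < p) (hq : 0 < q) (hpq : p ≠ q) (hlam : 0 < lam)
    (hT : 0 < T) (hA : 0 < A) (hB : 0 < B)
    (hE' : T - lam * A + B = 0)
    (hP : 0 ≤ ((N : ℝ) - 2) / (2 * N) * T - lam / p * A + 1 / q * B) :
    q < p ∨ 2 * N / ((N : ℝ) - 2) < p :=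
  necessary_condition_exterior_general N p q lam T A B hp hpq hT hB hE' hP
end

section
/- Let N be a positive integer, let p, q > 0 be real, and let T, A, B, λ be real numbers with T > 0, T − λA + B = 0 and ((N−2)/(2N))·T − (λ/p)·A + (1/q)·B ≥ 0. If d*(p,q) = N(p−2)(q−2) − 2pq ≤ 0, then E″ = T − (p−1)λA + (q−1)B satisfies E″ ≤ d*(p,q)·T/(2N) ≤ 0; in particular, if d*(p,q) < 0 then E″ < 0. (This is the exterior-domain part of Theorem 3(2°): under the Pohozaev sign condition P ≥ 0, solutions with d*(p,q) < 0 have negative second fibering derivative.) -/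
/-!
For `N, p, q ≠ 0` one has the algebraic identity `E'' = d*(p,q) T / (2N) - p q P + (p + q - 1) E'`
in `T, A, B, λ`. With `E' = 0` and `P ≥ 0` the middle term is nonpositive, which gives
`E'' ≤ d*(p,q) T / (2N)`, and the sign of the right-hand side is that of `d*(p,q)`.
-/

namespace Fibering

variable (N : ℕ) (p q T A B lam : ℝ)

def firstDeriv : ℝ := T - lam * A + B

def secondDeriv : ℝ := T - (p - 1) * lam * A + (q - 1) * B

noncomputable def pohozaev : ℝ := ((N : ℝ) - 2) / (2 * N) * T - lam / p * A + 1 / q * B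

def dStar : ℝ := (N : ℝ) * (p - 2) * (q - 2) - 2 * p * q

variable {N p q}

theorem secondDeriv_eq (hN : N ≠ 0) (hp : p ≠ 0) (hq : q ≠ 0) :
    secondDeriv p q T A B lam =
      dStar N p q * T / (2 * N) - p * q * pohozaev N p q T A B lam +
        (p + q - 1) * firstDeriv T A B lam := by
  unfold secondDeriv dStar pohozaev firstDeriv
  field_simp
  ring

theorem secondDeriv_le_of_pohozaev_nonneg (hN : N ≠ 0) (hp : 0 < p) (hq : 0 < q)
    (hE' : firstDeriv T A B lam = 0) (hP : 0 ≤ pohozaev N p q T A B lam) :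
    secondDeriv p q T A B lam ≤ dStar N p q * T / (2 * N) := by
  rw [secondDeriv_eq T A B lam hN hp.ne' hq.ne', hE', mul_zero, add_zero, sub_le_self_iff]
  exact mul_nonneg (mul_pos hp hq).le hP

end Fibering

open Fibering in
/-- Theorem 3(2°), exterior-domain part: if `E' = 0`, `P ≥ 0`, `T > 0` and
`d*(p,q) ≤ 0`, then `E'' ≤ d*(p,q) * T / (2N) ≤ 0`; in particular `d* < 0 → E'' < 0`. -/
theorem second_derivative_negative_exterior (N : ℕ) (hN : 0 < N) (p q T A B lam : ℝ)
    (hp : 0 < p) (hq : 0 < q) (hT : 0 < T)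
    (hE' : T - lam * A + B = 0)
    (hP : 0 ≤ ((N : ℝ) - 2) / (2 * N) * T - lam / p * A + 1 / q * B)
    (hd : (N : ℝ) * (p - 2) * (q - 2) - 2 * p * q ≤ 0) :
    T - (p - 1) * lam * A + (q - 1) * B ≤
      ((N : ℝ) * (p - 2) * (q - 2) - 2 * p * q) * T / (2 * N) ∧
    ((N : ℝ) * (p - 2) * (q - 2) - 2 * p * q) * T / (2 * N) ≤ 0 ∧
    ((N : ℝ) * (p - 2) * (q - 2) - 2 * p * q < 0 →
      T - (p - 1) * lam * A + (q - 1) * B < 0) := by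
  have h2N : (0 : ℝ) < 2 * N := by positivity
  have hbound : secondDeriv p q T A B lam ≤ dStar N p q * T / (2 * N) :=
    secondDeriv_le_of_pohozaev_nonneg T A B lam hN.ne' hp hq hE' hP
  have hnonpos : dStar N p q * T / (2 * N) ≤ 0 :=
    div_nonpos_of_nonpos_of_nonneg (mul_nonpos_of_nonpos_of_nonneg hd hT.le) h2N.le
  refine ⟨hbound, hnonpos, fun hneg => hbound.trans_lt ?_⟩
  exact div_neg_of_neg_of_pos (mul_neg_of_neg_of_pos hneg hT) h2N
end

section
/- Let T, A, B > 0, λ > 0 and let p, q > 0 be real with p < min(2, q). Then there exists a unique r > 0 with f_λ′(r) = r·T − λ·r^{p−1}·A + r^{q−1}·B = 0, and at this r one has f_λ″(r) = T − (p−1)·λ·r^{p−2}·A + (q−1)·r^{q−2}·B > 0. (This is property (F1) of the fibering map in the sublinear case: a unique nonzero stationary point, which is a nondegenerate minimum.) -/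
/-!
For `r > 0` the derivative factors as `f'(r) = r ^ (p - 1) * g(r)` with
`g(r) = T r ^ (2 - p) + B r ^ (q - p) - λ A`. Since `p < 2` and `p < q`, `g` is continuous and
strictly increasing on `[0, ∞)`, with `g 0 = -λ A < 0` and `g → ∞`, so it has exactly one
positive zero. At any stationary point the identity
`r f''(r) = (p - 1) f'(r) + (2 - p) r T + (q - p) r ^ (q - 1) B` makes `f''(r)` positive.
-/

open Real Set Filter

noncomputable section

def fiberingDeriv (T A B lam p q r : ℝ) : ℝ :=
  r * T - lam * r ^ (p - 1) * A + r ^ (q - 1) * B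

def fiberingDeriv2 (T A B lam p q r : ℝ) : ℝ :=
  T - (p - 1) * lam * r ^ (p - 2) * A + (q - 1) * r ^ (q - 2) * B

def fiberingReduced (T A B lam p q r : ℝ) : ℝ :=
  T * r ^ (2 - p) + B * r ^ (q - p) - lam * A

end

section

variable {T A B lam p q r : ℝ}

theorem fiberingDeriv_eq_rpow_mul_fiberingReduced (hr : 0 < r) :
    fiberingDeriv T A B lam p q r = r ^ (p - 1) * fiberingReduced T A B lam p q r := by
  have h2 : r ^ (p - 1) * r ^ (2 - p) = r := by
    rw [← rpow_add hr, show p - 1 + (2 - p) = 1 by ring, rpow_one]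
  have hq : r ^ (p - 1) * r ^ (q - p) = r ^ (q - 1) := by
    rw [← rpow_add hr, show p - 1 + (q - p) = q - 1 by ring]
  rw [fiberingDeriv, fiberingReduced]
  linear_combination (-T) * h2 - B * hq

theorem fiberingDeriv_eq_zero_iff (hr : 0 < r) :
    fiberingDeriv T A B lam p q r = 0 ↔ fiberingReduced T A B lam p q r = 0 := by
  rw [fiberingDeriv_eq_rpow_mul_fiberingReduced hr, mul_eq_zero,
    or_iff_right (rpow_pos_of_pos hr _).ne']

theorem mul_fiberingDeriv2 (hr : 0 < r) :
    r * fiberingDeriv2 T A B lam p q r =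
      (p - 1) * fiberingDeriv T A B lam p q r + (2 - p) * r * T + (q - p) * r ^ (q - 1) * B := by
  have hp : r ^ (p - 1) = r ^ (p - 2) * r := by
    rw [← rpow_add_one hr.ne']; ring_nf
  have hq : r ^ (q - 1) = r ^ (q - 2) * r := by
    rw [← rpow_add_one hr.ne']; ring_nf
  rw [fiberingDeriv2, fiberingDeriv, hp, hq]
  ring

theorem fiberingDeriv2_pos_of_fiberingDeriv_eq_zero (hT : 0 < T) (hB : 0 ≤ B) (hp2 : p < 2)
    (hpq : p ≤ q) (hr : 0 < r) (hcrit : fiberingDeriv T A B lam p q r = 0) :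
    0 < fiberingDeriv2 T A B lam p q r := by
  have hrf : 0 < r * fiberingDeriv2 T A B lam p q r := by
    rw [mul_fiberingDeriv2 hr, hcrit, mul_zero, zero_add]
    have : 0 ≤ (q - p) * r ^ (q - 1) * B :=
      mul_nonneg (mul_nonneg (sub_nonneg.2 hpq) (rpow_nonneg hr.le _)) hB
    have : 0 < (2 - p) * r * T := mul_pos (mul_pos (by linarith) hr) hT
    linarith
  exact pos_of_mul_pos_right hrf hr.le

theorem fiberingReduced_strictMonoOn (hT : 0 < T) (hB : 0 ≤ B) (hp2 : p < 2) (hpq : p ≤ q) :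
    StrictMonoOn (fiberingReduced T A B lam p q) (Ici 0) := by
  intro a ha b _ hab
  have h2 : a ^ (2 - p) < b ^ (2 - p) := rpow_lt_rpow ha hab (by linarith)
  have hq : a ^ (q - p) ≤ b ^ (q - p) := rpow_le_rpow ha hab.le (by linarith)
  simp only [fiberingReduced]
  linarith [mul_lt_mul_of_pos_left h2 hT, mul_le_mul_of_nonneg_left hq hB]

theorem continuous_fiberingReduced (hp2 : p ≤ 2) (hpq : p ≤ q) :
    Continuous (fiberingReduced T A B lam p q) := by
  have h2 : Continuous fun r : ℝ => r ^ (2 - p) := continuous_rpow_const (by linarith)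
  have hq : Continuous fun r : ℝ => r ^ (q - p) := continuous_rpow_const (by linarith)
  unfold fiberingReduced
  fun_prop

theorem fiberingReduced_zero (hp2 : p < 2) (hpq : p < q) :
    fiberingReduced T A B lam p q 0 = -(lam * A) := by
  simp [fiberingReduced, zero_rpow (sub_pos.2 hp2).ne', zero_rpow (sub_pos.2 hpq).ne']

theorem tendsto_fiberingReduced_atTop (hT : 0 < T) (hB : 0 ≤ B) (hp2 : p < 2) :
    Tendsto (fiberingReduced T A B lam p q) atTop atTop := by
  have hlow : Tendsto (fun r => T * r ^ (2 - p) + -(lam * A)) atTop atTop :=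
    tendsto_atTop_add_const_right _ _ ((tendsto_rpow_atTop (by linarith)).const_mul_atTop hT)
  refine tendsto_atTop_mono' _ ?_ hlow
  filter_upwards [eventually_ge_atTop 0] with r hr
  have : 0 ≤ B * r ^ (q - p) := mul_nonneg hB (rpow_nonneg hr _)
  simp only [fiberingReduced]
  linarith

theorem exists_pos_fiberingReduced_eq_zero (hT : 0 < T) (hB : 0 ≤ B) (hlamA : 0 < lam * A)
    (hp2 : p < 2) (hpq : p < q) : ∃ r, 0 < r ∧ fiberingReduced T A B lam p q r = 0 := by
  have hzero : fiberingReduced T A B lam p q 0 = -(lam * A) := fiberingReduced_zero hp2 hpq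
  obtain ⟨r, hr, hr0⟩ := intermediate_value_Ici
    (continuous_fiberingReduced hp2.le hpq.le).continuousOn
    (tendsto_fiberingReduced_atTop hT hB hp2)
    (show (0 : ℝ) ∈ Ici (fiberingReduced T A B lam p q 0) by rw [hzero, mem_Ici]; linarith)
  refine ⟨r, lt_of_le_of_ne hr ?_, hr0⟩
  rintro rfl
  rw [hzero] at hr0
  linarith

end

theorem fibering_F1_min_general (T A B lam p q : ℝ) (hT : 0 < T) (hA : 0 < A) (hB : 0 < B)
    (hlam : 0 < lam) (hpq : p < min 2 q) :
    ∃ r : ℝ, 0 < r ∧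
      r * T - lam * r ^ (p - 1) * A + r ^ (q - 1) * B = 0 ∧
      0 < T - (p - 1) * lam * r ^ (p - 2) * A + (q - 1) * r ^ (q - 2) * B ∧
      ∀ r' : ℝ, 0 < r' →
        r' * T - lam * r' ^ (p - 1) * A + r' ^ (q - 1) * B = 0 → r' = r := by
  obtain ⟨hp2, hpq⟩ := lt_min_iff.1 hpq
  obtain ⟨r, hr, hr0⟩ := exists_pos_fiberingReduced_eq_zero hT hB.le (mul_pos hlam hA) hp2 hpq
  have hcrit : fiberingDeriv T A B lam p q r = 0 := (fiberingDeriv_eq_zero_iff hr).2 hr0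
  refine ⟨r, hr, hcrit,
    fiberingDeriv2_pos_of_fiberingDeriv_eq_zero hT hB.le hp2 hpq.le hr hcrit, ?_⟩
  intro r' hr' hcrit'
  exact (fiberingReduced_strictMonoOn hT hB.le hp2 hpq.le).injOn hr'.le hr.le
    (((fiberingDeriv_eq_zero_iff hr').1 hcrit').trans hr0.symm)

/-- Property (F1), sublinear case `p < min 2 q`: the fibering map has a unique
nonzero stationary point, which is a nondegenerate minimum. -/
theorem fibering_F1_min (T A B lam p q : ℝ) (hT : 0 < T) (hA : 0 < A) (hB : 0 < B)
    (hlam : 0 < lam) (hp : 0 < p) (hq : 0 < q) (hpq : p < min 2 q) :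
    ∃ r : ℝ, 0 < r ∧
      r * T - lam * r ^ (p - 1) * A + r ^ (q - 1) * B = 0 ∧
      0 < T - (p - 1) * lam * r ^ (p - 2) * A + (q - 1) * r ^ (q - 2) * B ∧
      ∀ r' : ℝ, 0 < r' →
        r' * T - lam * r' ^ (p - 1) * A + r' ^ (q - 1) * B = 0 → r' = r :=
  fibering_F1_min_general T A B lam p q hT hA hB hlam hpq
end

section
/- Let T, A, B > 0, λ > 0 and let p, q > 0 be real with p > max(2, q). Then there exists a unique r > 0 with f_λ′(r) = r·T − λ·r^{p−1}·A + r^{q−1}·B = 0, and at this r one has f_λ″(r) = T − (p−1)·λ·r^{p−2}·A + (q−1)·r^{q−2}·B < 0. (This is property (F1) of the fibering map in the superlinear case: a unique nonzero stationary point, which is a nondegenerate maximum.) -/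
/-!
Dividing the stationary equation `r T - λ r^(p-1) A + r^(q-1) B = 0` by `r^(p-1)` turns it into
`T r^(2-p) + B r^(q-p) = λ A`. Since `p > max 2 q`, the left-hand side is continuous and strictly
decreasing on `(0, ∞)`, from `+∞` at `0⁺` to `0` at `+∞`, so it takes the value `λ A > 0` exactly
once. At that point `λ r^(p-2) A = T + r^(q-2) B`, which turns the second derivative into
`(2 - p) T + (q - p) r^(q-2) B < 0`.
-/

open Real Filter Topology Set

namespace Fibering

/-- `r ↦ r^(1-p) f_λ'(r) + λ A`, so that `f_λ'(r) = 0` iff `fiberingRatio T B p q r = λ A`. -/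
noncomputable def fiberingRatio (T B p q r : ℝ) : ℝ := T * r ^ (2 - p) + B * r ^ (q - p)

variable {T A B lam p q r : ℝ}

lemma stationary_eq_rpow_mul (hr : 0 < r) :
    r * T - lam * r ^ (p - 1) * A + r ^ (q - 1) * B =
      r ^ (p - 1) * (fiberingRatio T B p q r - lam * A) := by
  have h2 : r ^ (2 - p) * r ^ (p - 1) = r := by
    rw [← rpow_add hr, show 2 - p + (p - 1) = (1 : ℝ) by ring, rpow_one]
  have hq : r ^ (q - p) * r ^ (p - 1) = r ^ (q - 1) := by
    rw [← rpow_add hr, show q - p + (p - 1) = q - 1 by ring]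
  unfold fiberingRatio
  linear_combination (-T) * h2 - B * hq

lemma stationary_iff (hr : 0 < r) :
    r * T - lam * r ^ (p - 1) * A + r ^ (q - 1) * B = 0 ↔ fiberingRatio T B p q r = lam * A := by
  rw [stationary_eq_rpow_mul hr, mul_eq_zero, sub_eq_zero, or_iff_right (rpow_pos_of_pos hr _).ne']

lemma strictAntiOn_fiberingRatio (hT : 0 < T) (hB : 0 ≤ B) (hp : 2 < p) (hqp : q < p) :
    StrictAntiOn (fiberingRatio T B p q) (Ioi 0) := by
  intro x hx y _ hxy
  have h2 : y ^ (2 - p) < x ^ (2 - p) := rpow_lt_rpow_of_neg hx hxy (by linarith)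
  have hq : y ^ (q - p) ≤ x ^ (q - p) := (rpow_lt_rpow_of_neg hx hxy (by linarith)).le
  unfold fiberingRatio
  linarith [mul_lt_mul_of_pos_left h2 hT, mul_le_mul_of_nonneg_left hq hB]

lemma continuousOn_fiberingRatio : ContinuousOn (fiberingRatio T B p q) (Ioi 0) := by
  intro x hx
  have hx0 : x ≠ 0 := (mem_Ioi.mp hx).ne'
  exact ((continuousAt_const.mul (continuousAt_rpow_const x _ (.inl hx0))).add
    (continuousAt_const.mul (continuousAt_rpow_const x _ (.inl hx0)))).continuousWithinAt

lemma tendsto_fiberingRatio_atTop (hp : 2 < p) (hqp : q < p) :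
    Tendsto (fiberingRatio T B p q) atTop (𝓝 0) := by
  have h2 := tendsto_rpow_neg_atTop (y := p - 2) (by linarith)
  have hq := tendsto_rpow_neg_atTop (y := p - q) (by linarith)
  simp only [neg_sub] at h2 hq
  have h := (h2.const_mul T).add (hq.const_mul B)
  rwa [mul_zero, mul_zero, add_zero] at h

lemma tendsto_fiberingRatio_nhdsGT_zero (hT : 0 < T) (hB : 0 ≤ B) (hp : 2 < p) :
    Tendsto (fiberingRatio T B p q) (𝓝[>] 0) atTop := by
  have h2 := (tendsto_rpow_neg_nhdsGT_zero (y := 2 - p) (by linarith)).const_mul_atTop hT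
  refine tendsto_atTop_mono' _ ?_ h2
  filter_upwards [self_mem_nhdsWithin] with x hx
  exact le_add_of_nonneg_right (mul_nonneg hB (rpow_nonneg (le_of_lt hx) _))

lemma exists_fiberingRatio_eq (hT : 0 < T) (hB : 0 ≤ B) (hp : 2 < p) (hqp : q < p)
    {c : ℝ} (hc : 0 < c) : ∃ r, 0 < r ∧ fiberingRatio T B p q r = c := by
  obtain ⟨a, hca, ha⟩ := (((tendsto_fiberingRatio_nhdsGT_zero (q := q) hT hB hp).eventually
    (eventually_ge_atTop c)).and self_mem_nhdsWithin).exists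
  obtain ⟨b, hbc, hb⟩ := (((tendsto_fiberingRatio_atTop (T := T) (B := B) hp hqp).eventually
    (eventually_le_nhds hc)).and (eventually_gt_atTop 0)).exists
  exact continuousOn_fiberingRatio.surjOn_Icc (mem_Ioi.mpr hb) (mem_Ioi.mpr ha) ⟨hbc, hca⟩

lemma second_deriv_neg_of_stationary (hT : 0 < T) (hB : 0 ≤ B) (hp : 2 < p) (hqp : q < p)
    (hr : 0 < r) (hstat : r * T - lam * r ^ (p - 1) * A + r ^ (q - 1) * B = 0) :
    T - (p - 1) * lam * r ^ (p - 2) * A + (q - 1) * r ^ (q - 2) * B < 0 := by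
  have hp1 : r ^ (p - 1) = r ^ (p - 2) * r := by
    rw [← rpow_add_one hr.ne']; ring_nf
  have hq1 : r ^ (q - 1) = r ^ (q - 2) * r := by
    rw [← rpow_add_one hr.ne']; ring_nf
  have hbalance : lam * r ^ (p - 2) * A = T + r ^ (q - 2) * B := by
    refine mul_right_cancel₀ hr.ne' ?_
    rw [hp1, hq1] at hstat
    linear_combination -hstat
  have hBq : 0 ≤ r ^ (q - 2) * B := mul_nonneg (rpow_nonneg hr.le _) hB
  calc T - (p - 1) * lam * r ^ (p - 2) * A + (q - 1) * r ^ (q - 2) * B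
      = (2 - p) * T + (q - p) * (r ^ (q - 2) * B) := by linear_combination (1 - p) * hbalance
    _ < 0 := by nlinarith

end Fibering

open Fibering

theorem fibering_F1_max_general (T A B lam p q : ℝ) (hT : 0 < T) (hA : 0 < A) (hB : 0 < B)
    (hlam : 0 < lam) (hpq : max 2 q < p) :
    ∃ r : ℝ, 0 < r ∧
      r * T - lam * r ^ (p - 1) * A + r ^ (q - 1) * B = 0 ∧
      T - (p - 1) * lam * r ^ (p - 2) * A + (q - 1) * r ^ (q - 2) * B < 0 ∧
      ∀ r' : ℝ, 0 < r' →
        r' * T - lam * r' ^ (p - 1) * A + r' ^ (q - 1) * B = 0 → r' = r := by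
  obtain ⟨hp, hqp⟩ := max_lt_iff.mp hpq
  obtain ⟨r, hr, hratio⟩ := exists_fiberingRatio_eq hT hB.le hp hqp (mul_pos hlam hA)
  have hstat := (stationary_iff hr).mpr hratio
  refine ⟨r, hr, hstat, second_deriv_neg_of_stationary hT hB.le hp hqp hr hstat, ?_⟩
  intro r' hr' hstat'
  exact (strictAntiOn_fiberingRatio hT hB.le hp hqp).injOn hr' hr
    (((stationary_iff hr').mp hstat').trans hratio.symm)

/-- Property (F1), superlinear case `p > max 2 q`: the fibering map has a unique
nonzero stationary point, which is a nondegenerate maximum. -/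
theorem fibering_F1_max (T A B lam p q : ℝ) (hT : 0 < T) (hA : 0 < A) (hB : 0 < B)
    (hlam : 0 < lam) (hp : 0 < p) (hq : 0 < q) (hpq : max 2 q < p) :
    ∃ r : ℝ, 0 < r ∧
      r * T - lam * r ^ (p - 1) * A + r ^ (q - 1) * B = 0 ∧
      T - (p - 1) * lam * r ^ (p - 2) * A + (q - 1) * r ^ (q - 2) * B < 0 ∧
      ∀ r' : ℝ, 0 < r' →
        r' * T - lam * r' ^ (p - 1) * A + r' ^ (q - 1) * B = 0 → r' = r :=
  fibering_F1_max_general T A B lam p q hT hA hB hlam hpq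
end

section
/- Let T, A, B > 0 and let p, q be real with either 1 < q < p < 2 or 2 < p < q. Then there exists λ* > 0 (depending on T, A, B, p, q) such that: (i) for every λ with 0 < λ < λ*, f_λ′(r) ≠ 0 for all r > 0; (ii) for λ = λ*, there is exactly one r > 0 with f_λ′(r) = 0, and at this r one has f_λ″(r) = 0; (iii) for every λ > λ*, there are exactly two points 0 < r₁ < r₂ with f_λ′(r₁) = f_λ′(r₂) = 0, and f_λ″(r₁) < 0 while f_λ″(r₂) > 0. (This is property (F2) of the fibering map: a fold threshold λ* below which there are no nonzero stationary points and above which there are exactly two, a maximum and a minimum.) -/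
/-!
Along the ray, `f_λ'(r) = r ^ (p - 1) * (g r - λ A)` with `g r = T r ^ (2 - p) + B r ^ (q - p)`,
so the nonzero stationary points are the solutions of `g r = λ A`. In both regimes the exponents
`2 - p` and `q - p` have opposite signs, hence `g` tends to `+∞` at `0` and at `∞`, decreases
up to the unique zero `ρ` of `r g'(r)` and increases after it. The threshold is `λ* = g ρ / A`,
and at a stationary point `f_λ''(r) = r ^ (p - 2) * r g'(r)`, whose sign is that of `r - ρ`.
-/

open Set Filter Topology

noncomputable section

def powSum (C a D b r : ℝ) : ℝ := C * r ^ a + D * r ^ b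

variable {C D a b r : ℝ}

theorem powSum_comm (C a D b : ℝ) : powSum C a D b = powSum D b C a :=
  funext fun _ => add_comm _ _

theorem powSum_pos (hC : 0 < C) (hD : 0 < D) (hr : 0 < r) : 0 < powSum C a D b r := by
  unfold powSum; positivity

theorem hasDerivAt_powSum (hr : 0 < r) :
    HasDerivAt (powSum C a D b) (powSum (a * C) a (b * D) b r / r) r := by
  refine (((Real.hasDerivAt_rpow_const (p := a) (Or.inl hr.ne')).const_mul C).add
    ((Real.hasDerivAt_rpow_const (p := b) (Or.inl hr.ne')).const_mul D)).congr_deriv ?_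
  simp only [powSum, Real.rpow_sub_one hr.ne']
  field_simp

theorem continuousOn_powSum : ContinuousOn (powSum C a D b) (Ioi 0) :=
  fun _ hr => (hasDerivAt_powSum hr).continuousAt.continuousWithinAt

theorem tendsto_powSum_nhdsGT_zero (hC : 0 < C) (hD : 0 ≤ D) (ha : a < 0) :
    Tendsto (powSum C a D b) (𝓝[>] 0) atTop := by
  refine tendsto_atTop_mono' _ ?_ ((tendsto_rpow_neg_nhdsGT_zero ha).const_mul_atTop hC)
  filter_upwards [self_mem_nhdsWithin] with r hr
  have : 0 ≤ D * r ^ b := mul_nonneg hD (Real.rpow_nonneg hr.le b)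
  simp only [powSum]
  linarith

theorem tendsto_powSum_atTop (hC : 0 ≤ C) (hD : 0 < D) (hb : 0 < b) :
    Tendsto (powSum C a D b) atTop atTop := by
  refine tendsto_atTop_mono' _ ?_ ((tendsto_rpow_atTop hb).const_mul_atTop hD)
  filter_upwards [eventually_gt_atTop 0] with r hr
  have : 0 ≤ C * r ^ a := mul_nonneg hC (Real.rpow_nonneg hr.le a)
  simp only [powSum]
  linarith

/-- `g` has a fold at `ρ` on `(0, ∞)`; `φ` stands for a function with the sign of `g'`. -/
structure IsFoldPoint (g φ : ℝ → ℝ) (ρ : ℝ) : Prop where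
  pos : 0 < ρ
  lt_of_ne : ∀ r, 0 < r → r ≠ ρ → g ρ < g r
  eq_zero : φ ρ = 0
  two_solutions : ∀ L, g ρ < L → ∃ r₁ r₂, 0 < r₁ ∧ r₁ < r₂ ∧ g r₁ = L ∧ g r₂ = L ∧
    φ r₁ < 0 ∧ 0 < φ r₂ ∧ ∀ r, 0 < r → g r = L → r = r₁ ∨ r = r₂

def foldPoint (C a D b : ℝ) : ℝ := (-(a * C) / (b * D)) ^ (b - a)⁻¹

theorem foldPoint_pos (hC : 0 < C) (hD : 0 < D) (ha : a < 0) (hb : 0 < b) :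
    0 < foldPoint C a D b :=
  Real.rpow_pos_of_pos (div_pos (by nlinarith) (by positivity)) _

theorem foldPoint_rpow (hC : 0 < C) (hD : 0 < D) (ha : a < 0) (hb : 0 < b) :
    foldPoint C a D b ^ (b - a) = -(a * C) / (b * D) := by
  rw [foldPoint, ← Real.rpow_mul (div_pos (by nlinarith) (by positivity)).le,
    inv_mul_cancel₀ (by linarith), Real.rpow_one]

theorem powSum_exponent_mul_eq (hC : 0 < C) (hD : 0 < D) (ha : a < 0) (hb : 0 < b) (hr : 0 < r) :
    powSum (a * C) a (b * D) b r
      = b * D * r ^ a * (r ^ (b - a) - foldPoint C a D b ^ (b - a)) := by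
  have : r ^ a ≠ 0 := (Real.rpow_pos_of_pos hr a).ne'
  rw [foldPoint_rpow hC hD ha hb, Real.rpow_sub hr, powSum]
  field_simp
  ring

theorem powSum_exponent_mul_neg (hC : 0 < C) (hD : 0 < D) (ha : a < 0) (hb : 0 < b) (hr : 0 < r)
    (hrρ : r < foldPoint C a D b) : powSum (a * C) a (b * D) b r < 0 := by
  rw [powSum_exponent_mul_eq hC hD ha hb hr]
  have := Real.rpow_pos_of_pos hr a
  exact mul_neg_of_pos_of_neg (by positivity)
    (sub_neg.2 (Real.rpow_lt_rpow hr.le hrρ (by linarith)))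

theorem powSum_exponent_mul_pos (hC : 0 < C) (hD : 0 < D) (ha : a < 0) (hb : 0 < b)
    (hρr : foldPoint C a D b < r) : 0 < powSum (a * C) a (b * D) b r := by
  have hρ := foldPoint_pos hC hD ha hb
  have hr := hρ.trans hρr
  rw [powSum_exponent_mul_eq hC hD ha hb hr]
  have := Real.rpow_pos_of_pos hr a
  exact mul_pos (by positivity) (sub_pos.2 (Real.rpow_lt_rpow hρ.le hρr (by linarith)))

theorem powSum_exponent_mul_foldPoint (hC : 0 < C) (hD : 0 < D) (ha : a < 0) (hb : 0 < b) :
    powSum (a * C) a (b * D) b (foldPoint C a D b) = 0 := by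
  rw [powSum_exponent_mul_eq hC hD ha hb (foldPoint_pos hC hD ha hb), sub_self, mul_zero]

theorem strictAntiOn_powSum (hC : 0 < C) (hD : 0 < D) (ha : a < 0) (hb : 0 < b) :
    StrictAntiOn (powSum C a D b) (Ioc 0 (foldPoint C a D b)) := by
  refine strictAntiOn_of_deriv_neg (convex_Ioc _ _)
    (continuousOn_powSum.mono Ioc_subset_Ioi_self) fun r hr => ?_
  rw [interior_Ioc] at hr
  rw [(hasDerivAt_powSum hr.1).deriv]
  exact div_neg_of_neg_of_pos (powSum_exponent_mul_neg hC hD ha hb hr.1 hr.2) hr.1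

theorem strictMonoOn_powSum (hC : 0 < C) (hD : 0 < D) (ha : a < 0) (hb : 0 < b) :
    StrictMonoOn (powSum C a D b) (Ici (foldPoint C a D b)) := by
  have hρ := foldPoint_pos hC hD ha hb
  refine strictMonoOn_of_deriv_pos (convex_Ici _)
    (continuousOn_powSum.mono fun r hr => hρ.trans_le hr) fun r hr => ?_
  rw [interior_Ici] at hr
  rw [(hasDerivAt_powSum (hρ.trans hr)).deriv]
  exact div_pos (powSum_exponent_mul_pos hC hD ha hb hr) (hρ.trans hr)

theorem powSum_foldPoint_lt (hC : 0 < C) (hD : 0 < D) (ha : a < 0) (hb : 0 < b) (hr : 0 < r)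
    (hne : r ≠ foldPoint C a D b) :
    powSum C a D b (foldPoint C a D b) < powSum C a D b r := by
  have hρ := foldPoint_pos hC hD ha hb
  rcases hne.lt_or_gt with hlt | hgt
  · exact strictAntiOn_powSum hC hD ha hb ⟨hr, hlt.le⟩ ⟨hρ, le_rfl⟩ hlt
  · exact strictMonoOn_powSum hC hD ha hb self_mem_Ici hgt.le hgt

theorem exists_lt_foldPoint_powSum_eq (hC : 0 < C) (hD : 0 < D) (ha : a < 0) (hb : 0 < b)
    {L : ℝ} (hL : powSum C a D b (foldPoint C a D b) < L) :
    ∃ r ∈ Ioo 0 (foldPoint C a D b), powSum C a D b r = L := by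
  obtain ⟨r₀, hLr₀, hr₀⟩ := (((tendsto_powSum_nhdsGT_zero hC hD.le ha).eventually_ge_atTop L).and
    (Ioo_mem_nhdsGT (foldPoint_pos hC hD ha hb))).exists
  obtain ⟨r, hr, hgr⟩ := intermediate_value_Icc' hr₀.2.le
    (continuousOn_powSum.mono fun x hx => hr₀.1.trans_le hx.1) ⟨hL.le, hLr₀⟩
  refine ⟨r, ⟨hr₀.1.trans_le hr.1, hr.2.lt_of_ne ?_⟩, hgr⟩
  rintro rfl
  exact hL.ne hgr

theorem exists_foldPoint_lt_powSum_eq (hC : 0 < C) (hD : 0 < D) (ha : a < 0) (hb : 0 < b)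
    {L : ℝ} (hL : powSum C a D b (foldPoint C a D b) < L) :
    ∃ r ∈ Ioi (foldPoint C a D b), powSum C a D b r = L := by
  have hρ := foldPoint_pos hC hD ha hb
  obtain ⟨R, hLR, hR⟩ := (((tendsto_powSum_atTop hC.le hD hb).eventually_ge_atTop L).and
    (eventually_gt_atTop (foldPoint C a D b))).exists
  obtain ⟨r, hr, hgr⟩ := intermediate_value_Icc hR.le
    (continuousOn_powSum.mono fun x hx => hρ.trans_le hx.1) ⟨hL.le, hLR⟩
  refine ⟨r, hr.1.lt_of_ne ?_, hgr⟩
  rintro rfl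
  exact hL.ne hgr

theorem isFoldPoint_powSum_of_neg_of_pos (hC : 0 < C) (hD : 0 < D) (ha : a < 0) (hb : 0 < b) :
    IsFoldPoint (powSum C a D b) (powSum (a * C) a (b * D) b) (foldPoint C a D b) where
  pos := foldPoint_pos hC hD ha hb
  lt_of_ne _ hr hne := powSum_foldPoint_lt hC hD ha hb hr hne
  eq_zero := powSum_exponent_mul_foldPoint hC hD ha hb
  two_solutions L hL := by
    have hρ := foldPoint_pos hC hD ha hb
    obtain ⟨r₁, ⟨h0, h₁ρ⟩, hg₁⟩ := exists_lt_foldPoint_powSum_eq hC hD ha hb hL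
    obtain ⟨r₂, hρ₂, hg₂⟩ := exists_foldPoint_lt_powSum_eq hC hD ha hb hL
    refine ⟨r₁, r₂, h0, h₁ρ.trans hρ₂, hg₁, hg₂, powSum_exponent_mul_neg hC hD ha hb h0 h₁ρ,
      powSum_exponent_mul_pos hC hD ha hb hρ₂, fun r hr hgr => ?_⟩
    rcases le_or_gt r (foldPoint C a D b) with hle | hgt
    · exact .inl <| (strictAntiOn_powSum hC hD ha hb).injOn ⟨hr, hle⟩ ⟨h0, h₁ρ.le⟩
        (hgr.trans hg₁.symm)
    · exact .inr <| (strictMonoOn_powSum hC hD ha hb).injOn (mem_Ici.2 hgt.le)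
        (mem_Ici.2 hρ₂.le) (hgr.trans hg₂.symm)

theorem exists_isFoldPoint_powSum (hC : 0 < C) (hD : 0 < D) (hab : a * b < 0) :
    ∃ ρ, IsFoldPoint (powSum C a D b) (powSum (a * C) a (b * D) b) ρ := by
  rcases lt_or_gt_of_ne (show a ≠ 0 by rintro rfl; simp at hab) with ha | ha
  · exact ⟨_, isFoldPoint_powSum_of_neg_of_pos hC hD ha (pos_of_mul_neg_right hab ha.le)⟩
  · rw [powSum_comm C, powSum_comm (a * C)]
    exact ⟨_, isFoldPoint_powSum_of_neg_of_pos hD hC (neg_of_mul_neg_right hab ha.le) ha⟩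

theorem fibering_deriv_eq (T A B p q lam : ℝ) (hr : 0 < r) :
    r * T - lam * r ^ (p - 1) * A + r ^ (q - 1) * B
      = r ^ (p - 1) * (powSum T (2 - p) B (q - p) r - lam * A) := by
  have h₁ : r ^ (p - 1) * r ^ (2 - p) = r := by
    rw [← Real.rpow_add hr, show p - 1 + (2 - p) = 1 by ring, Real.rpow_one]
  have h₂ : r ^ (p - 1) * r ^ (q - p) = r ^ (q - 1) := by
    rw [← Real.rpow_add hr, show p - 1 + (q - p) = q - 1 by ring]
  rw [powSum]
  linear_combination -T * h₁ - B * h₂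

theorem fibering_secondDeriv_eq (T A B p q lam : ℝ) (hr : 0 < r) :
    T - (p - 1) * lam * r ^ (p - 2) * A + (q - 1) * r ^ (q - 2) * B
      = r ^ (p - 2) * ((p - 1) * (powSum T (2 - p) B (q - p) r - lam * A)
          + powSum ((2 - p) * T) (2 - p) ((q - p) * B) (q - p) r) := by
  have h₁ : r ^ (p - 2) * r ^ (2 - p) = 1 := by
    rw [← Real.rpow_add hr, show p - 2 + (2 - p) = 0 by ring, Real.rpow_zero]
  have h₂ : r ^ (p - 2) * r ^ (q - p) = r ^ (q - 2) := by
    rw [← Real.rpow_add hr, show p - 2 + (q - p) = q - 2 by ring]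
  simp only [powSum]
  linear_combination -T * h₁ - (q - 1) * B * h₂

end

/-- Property (F2) of the fibering map: for `1 < q < p < 2` or `2 < p < q` there is a
fold threshold `λ*` below which there are no nonzero stationary points, at which
there is exactly one (degenerate), and above which there are exactly two, a
maximum followed by a minimum. -/
theorem fibering_F2_fold (T A B p q : ℝ) (hT : 0 < T) (hA : 0 < A) (hB : 0 < B)
    (hpq : (1 < q ∧ q < p ∧ p < 2) ∨ (2 < p ∧ p < q)) :
    ∃ lamStar : ℝ, 0 < lamStar ∧
      (∀ lam : ℝ, 0 < lam → lam < lamStar → ∀ r : ℝ, 0 < r →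
        r * T - lam * r ^ (p - 1) * A + r ^ (q - 1) * B ≠ 0) ∧
      (∃ r : ℝ, 0 < r ∧
        r * T - lamStar * r ^ (p - 1) * A + r ^ (q - 1) * B = 0 ∧
        T - (p - 1) * lamStar * r ^ (p - 2) * A + (q - 1) * r ^ (q - 2) * B = 0 ∧
        ∀ r' : ℝ, 0 < r' →
          r' * T - lamStar * r' ^ (p - 1) * A + r' ^ (q - 1) * B = 0 → r' = r) ∧
      (∀ lam : ℝ, lamStar < lam →
        ∃ r₁ r₂ : ℝ, 0 < r₁ ∧ r₁ < r₂ ∧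
          r₁ * T - lam * r₁ ^ (p - 1) * A + r₁ ^ (q - 1) * B = 0 ∧
          r₂ * T - lam * r₂ ^ (p - 1) * A + r₂ ^ (q - 1) * B = 0 ∧
          T - (p - 1) * lam * r₁ ^ (p - 2) * A + (q - 1) * r₁ ^ (q - 2) * B < 0 ∧
          0 < T - (p - 1) * lam * r₂ ^ (p - 2) * A + (q - 1) * r₂ ^ (q - 2) * B ∧
          ∀ r : ℝ, 0 < r →
            r * T - lam * r ^ (p - 1) * A + r ^ (q - 1) * B = 0 → r = r₁ ∨ r = r₂) := by
  have hab : (2 - p) * (q - p) < 0 := by rcases hpq with h | h <;> nlinarith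
  obtain ⟨ρ, hfold⟩ := exists_isFoldPoint_powSum hT hB hab
  have crit (lam r : ℝ) (hr : 0 < r) :
      r * T - lam * r ^ (p - 1) * A + r ^ (q - 1) * B = 0 ↔ powSum T (2 - p) B (q - p) r = lam * A := by
    rw [fibering_deriv_eq T A B p q lam hr, mul_eq_zero, sub_eq_zero,
      or_iff_right (Real.rpow_pos_of_pos hr _).ne']
  have second (lam r : ℝ) (hr : 0 < r) (hgr : powSum T (2 - p) B (q - p) r = lam * A) :
      T - (p - 1) * lam * r ^ (p - 2) * A + (q - 1) * r ^ (q - 2) * B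
        = r ^ (p - 2) * powSum ((2 - p) * T) (2 - p) ((q - p) * B) (q - p) r := by
    rw [fibering_secondDeriv_eq T A B p q lam hr, hgr, sub_self, mul_zero, zero_add]
  set lamStar := powSum T (2 - p) B (q - p) ρ / A
  have hgρ : powSum T (2 - p) B (q - p) ρ = lamStar * A := (div_mul_cancel₀ _ hA.ne').symm
  refine ⟨lamStar, div_pos (powSum_pos hT hB hfold.pos) hA, ?_, ?_, ?_⟩
  · intro lam _ hlam r hr hzero
    have hlt : lam * A < powSum T (2 - p) B (q - p) ρ := (lt_div_iff₀ hA).1 hlam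
    rw [crit lam r hr] at hzero
    rcases eq_or_ne r ρ with rfl | hne
    · linarith
    · linarith [hfold.lt_of_ne r hr hne]
  · refine ⟨ρ, hfold.pos, (crit _ ρ hfold.pos).2 hgρ, ?_, fun r hr h => ?_⟩
    · rw [second _ ρ hfold.pos hgρ, hfold.eq_zero, mul_zero]
    · by_contra hne
      rw [crit _ r hr, ← hgρ] at h
      exact (hfold.lt_of_ne r hr hne).ne' h
  · intro lam hlam
    obtain ⟨r₁, r₂, h0, h12, hg₁, hg₂, hφ₁, hφ₂, huniq⟩ :=
      hfold.two_solutions (lam * A) ((div_lt_iff₀ hA).1 hlam)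
    have h0₂ := h0.trans h12
    refine ⟨r₁, r₂, h0, h12, (crit lam r₁ h0).2 hg₁, (crit lam r₂ h0₂).2 hg₂, ?_, ?_,
      fun r hr h => huniq r hr ((crit lam r hr).1 h)⟩
    · rw [second lam r₁ h0 hg₁]
      exact mul_neg_of_pos_of_neg (Real.rpow_pos_of_pos h0 _) hφ₁
    · rw [second lam r₂ h0₂ hg₂]
      exact mul_pos (Real.rpow_pos_of_pos h0₂ _) hφ₂
end
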